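/- For all real numbers s < t with t − s < 2π, there exists a piecewise Möbius vector field f such that f(θ) ≥ 0 for all θ ∈ ℝ, f(θ) = 0 for every θ whose residue modulo 2π lies outside the open interval (s, t), and (1/2π)·∫₀^{2π} f(θ) dθ = 1. -/

import Mathlib

/-- A piecewise Möbius vector field: a 2π-periodic everywhere differentiable
function which is, on each of finitely many arcs covering the circle, of the
form `θ ↦ α + β cos θ + γ sin θ`. -/
def IsPiecewiseMobius (f : ℝ → ℝ) : Prop :=
  Function.Periodic f (2 * Real.pi) ∧ (∀ x : ℝ, DifferentiableAt ℝ f x) ∧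
    ∃ (N : ℕ) (θ α β γ : ℕ → ℝ), 1 ≤ N ∧ (∀ k < N, θ k < θ (k + 1)) ∧
      θ N = θ 0 + 2 * Real.pi ∧
      ∀ k, 1 ≤ k → k ≤ N → ∀ x ∈ Set.Icc (θ (k - 1)) (θ k),
        f x = α k + β k * Real.cos x + γ k * Real.sin x

/-!
The bump is a function of the angular distance `u = arccos (cos (x - m)) ∈ [0, π]` to a centre
`m`: the cap `a (1 - 2 cos δ + cos u)` for `u ≤ δ`, the arc `a (1 - cos (2δ - u))` for
`δ ≤ u ≤ 2δ`, and `0` beyond. Consecutive pieces agree to first order at `u = δ` and `u = 2δ`, so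
the profile is differentiable, and composing with `arccos ∘ cos` makes the field `2π`-periodic for
free. The chain rule only has to be applied where `cos (x - m) ∈ [cos 2δ, cos δ]`, away from the
singular points `±1` of `arccos`; elsewhere the field is locally `0` or
`a (1 - 2 cos δ + cos (x - m))`. The integral over a period is `4 a δ (1 - cos δ)`, which fixes `a`,
and `δ = (t - s) / 4` makes the support the arc `(s, t)`.
-/

open Real Set intervalIntegral

def IsMobiusOn (f : ℝ → ℝ) (s : Set ℝ) : Prop :=
  ∃ α β γ : ℝ, ∀ x ∈ s, f x = α + β * cos x + γ * sin x

lemma IsMobiusOn.of_eqOn_cos_sub {f : ℝ → ℝ} {s : Set ℝ} {A B c : ℝ}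
    (h : EqOn f (fun x => A + B * cos (x - c)) s) : IsMobiusOn f s :=
  ⟨A, B * cos c, B * sin c, fun x hx => by simp only [h hx, cos_sub]; ring⟩

lemma IsPiecewiseMobius.of_isMobiusOn {f : ℝ → ℝ} (hper : Function.Periodic f (2 * π))
    (hdiff : ∀ x, DifferentiableAt ℝ f x) {N : ℕ} (θ : ℕ → ℝ) (hN : 1 ≤ N)
    (hθ : ∀ k < N, θ k < θ (k + 1)) (hθN : θ N = θ 0 + 2 * π)
    (hf : ∀ k, 1 ≤ k → k ≤ N → IsMobiusOn f (Icc (θ (k - 1)) (θ k))) :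
    IsPiecewiseMobius f := by
  have : ∀ k, ∃ p : ℝ × ℝ × ℝ, 1 ≤ k → k ≤ N →
      ∀ x ∈ Icc (θ (k - 1)) (θ k), f x = p.1 + p.2.1 * cos x + p.2.2 * sin x := by
    intro k
    by_cases hk : 1 ≤ k ∧ k ≤ N
    · obtain ⟨α, β, γ, h⟩ := hf k hk.1 hk.2
      exact ⟨(α, β, γ), fun _ _ => h⟩
    · exact ⟨0, fun h1 h2 => absurd ⟨h1, h2⟩ hk⟩
  choose p hp using this
  exact ⟨hper, hdiff, N, θ, fun k => (p k).1, fun k => (p k).2.1, fun k => (p k).2.2,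
    hN, hθ, hθN, hp⟩

lemma HasDerivAt.ite_le {p q : ℝ → ℝ} {b d : ℝ} (hp : HasDerivAt p d b)
    (hq : HasDerivAt q d b) (hb : p b = q b) :
    HasDerivAt (fun x => if x ≤ b then p x else q x) d b := by
  have hIic : HasDerivWithinAt (fun x => if x ≤ b then p x else q x) d (Iic b) b :=
    hp.hasDerivWithinAt.congr (fun x hx => if_pos hx) (if_pos le_rfl)
  have hIci : HasDerivWithinAt (fun x => if x ≤ b then p x else q x) d (Ici b) b := by
    refine hq.hasDerivWithinAt.congr (fun x hx => ?_) (by simp [hb])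
    rcases (mem_Ici.1 hx).eq_or_lt with rfl | hlt
    · simp [hb]
    · exact if_neg hlt.not_ge
  simpa [Iic_union_Ici] using hIic.union hIci

lemma Differentiable.ite_le {p q : ℝ → ℝ} {b d : ℝ} (hp : Differentiable ℝ p)
    (hq : Differentiable ℝ q) (hp' : HasDerivAt p d b) (hq' : HasDerivAt q d b)
    (hb : p b = q b) : Differentiable ℝ (fun x => if x ≤ b then p x else q x) := by
  intro x
  rcases lt_trichotomy x b with hx | rfl | hx
  · refine (hp x).congr_of_eventuallyEq ?_
    filter_upwards [gt_mem_nhds hx] with y hy using if_pos hy.le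
  · exact (hp'.ite_le hq' hb).differentiableAt
  · refine (hq x).congr_of_eventuallyEq ?_
    filter_upwards [lt_mem_nhds hx] with y hy using if_neg hy.not_ge

lemma integral_comp_abs_symm {g : ℝ → ℝ} (hg : Continuous g) {c : ℝ} (hc : 0 ≤ c) :
    ∫ x in -c..c, g |x| = 2 * ∫ x in 0..c, g x := by
  have hint : ∀ u v : ℝ, IntervalIntegrable (fun x => g |x|) MeasureTheory.volume u v :=
    fun u v => (hg.comp continuous_abs).intervalIntegrable u v
  have hpos : ∫ x in 0..c, g |x| = ∫ x in 0..c, g x :=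
    integral_congr fun x hx => by rw [uIcc_of_le hc] at hx; rw [abs_of_nonneg hx.1]
  have hneg : ∫ x in -c..0, g |x| = ∫ x in 0..c, g |x| := by
    simpa using (integral_comp_neg (a := 0) (b := c) (fun x => g |x|)).symm
  rw [← integral_add_adjacent_intervals (hint _ _) (hint _ _), hneg, hpos, two_mul]

lemma cos_le_cos_of_le_of_le_two_pi_sub {u v : ℝ} (hv : 0 ≤ v) (hvu : v ≤ u)
    (hu : u ≤ 2 * π - v) : cos u ≤ cos v := by
  rcases le_or_gt u π with hπ | hπ
  · exact cos_le_cos_of_nonneg_of_le_pi hv hπ hvu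
  · rw [← cos_two_pi_sub u]
    exact cos_le_cos_of_nonneg_of_le_pi hv (by linarith) (by linarith)

lemma cos_lt_one_of_pos_of_le_pi {x : ℝ} (hx : 0 < x) (hxπ : x ≤ π) : cos x < 1 := by
  simpa using cos_lt_cos_of_nonneg_of_le_pi le_rfl hxπ hx

namespace MobiusBump

noncomputable def bumpProfile (a δ u : ℝ) : ℝ :=
  if u ≤ δ then a * (1 - 2 * cos δ + cos u)
  else if u ≤ 2 * δ then a * (1 - cos (2 * δ - u))
  else 0

noncomputable def circleBump (a δ m x : ℝ) : ℝ :=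
  bumpProfile a δ (arccos (cos (x - m)))

variable {a δ u : ℝ}

lemma bumpProfile_of_le (h : u ≤ δ) : bumpProfile a δ u = a * (1 - 2 * cos δ + cos u) :=
  if_pos h

lemma bumpProfile_of_mem_Icc (h : u ∈ Icc δ (2 * δ)) :
    bumpProfile a δ u = a * (1 - cos (2 * δ - u)) := by
  rcases h.1.eq_or_lt with rfl | hlt
  · rw [bumpProfile_of_le le_rfl, show 2 * δ - δ = δ by ring]
    ring
  · exact (if_neg hlt.not_ge).trans (if_pos h.2)

lemma bumpProfile_of_two_mul_le (hδ : 0 < δ) (h : 2 * δ ≤ u) : bumpProfile a δ u = 0 := by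
  rcases h.eq_or_lt with rfl | hlt
  · simp [bumpProfile_of_mem_Icc (a := a) ⟨by linarith, le_rfl⟩]
  · exact (if_neg (by linarith)).trans (if_neg hlt.not_ge)

lemma bumpProfile_nonneg (ha : 0 ≤ a) (hδπ : δ ≤ π) (hu : 0 ≤ u) : 0 ≤ bumpProfile a δ u := by
  rcases le_or_gt u δ with h | h
  · rw [bumpProfile_of_le h]
    have : cos δ ≤ cos u := cos_le_cos_of_nonneg_of_le_pi hu hδπ h
    nlinarith [cos_le_one δ]
  · unfold bumpProfile
    split_ifs
    · linarith
    · nlinarith [cos_le_one (2 * δ - u)]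
    · exact le_rfl

lemma differentiable_bumpProfile (hδ : 0 < δ) : Differentiable ℝ (bumpProfile a δ) := by
  have hcap : ∀ u, HasDerivAt (fun u => a * (1 - 2 * cos δ + cos u)) (-(a * sin u)) u := by
    intro u
    simpa using ((hasDerivAt_cos u).const_add (1 - 2 * cos δ)).const_mul a
  have harc : ∀ u,
      HasDerivAt (fun u => a * (1 - cos (2 * δ - u))) (-(a * sin (2 * δ - u))) u := by
    intro u
    simpa using (((hasDerivAt_id u).const_sub (2 * δ)).cos.const_sub 1).const_mul a
  have htail : Differentiable ℝ (fun u => if u ≤ 2 * δ then a * (1 - cos (2 * δ - u)) else 0) :=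
    Differentiable.ite_le (fun u => (harc u).differentiableAt) (differentiable_const 0)
      (by simpa using harc (2 * δ)) (hasDerivAt_const _ _) (by simp)
  refine Differentiable.ite_le (fun u => (hcap u).differentiableAt) htail (hcap δ) ?_
    (by rw [if_pos (by linarith)]; ring_nf)
  refine (harc δ).congr_of_eventuallyEq ?_ |>.congr_deriv (by ring_nf)
  filter_upwards [gt_mem_nhds (by linarith : δ < 2 * δ)] with u hu using if_pos hu.le

lemma integral_bumpProfile (hδ : 0 < δ) (hδπ : 2 * δ ≤ π) :
    ∫ u in 0..π, bumpProfile a δ u = 2 * a * δ * (1 - cos δ) := by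
  have hint : ∀ u v : ℝ, IntervalIntegrable (bumpProfile a δ) MeasureTheory.volume u v :=
    fun u v => (differentiable_bumpProfile hδ).continuous.intervalIntegrable u v
  have hcap : ∫ u in 0..δ, bumpProfile a δ u = a * ((1 - 2 * cos δ) * δ + sin δ) := by
    rw [integral_congr fun u hu => bumpProfile_of_le (uIcc_of_le hδ.le ▸ hu).2,
      integral_const_mul, integral_add intervalIntegrable_const intervalIntegrable_cos,
      integral_cos]
    simp only [integral_const, smul_eq_mul, sin_zero]
    ring
  have harc : ∫ u in δ..2 * δ, bumpProfile a δ u = a * (δ - sin δ) := by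
    have hδ2δ : δ ≤ 2 * δ := by linarith
    rw [integral_congr fun u hu => bumpProfile_of_mem_Icc (uIcc_of_le hδ2δ ▸ hu),
      integral_const_mul, integral_sub intervalIntegrable_const
        ((by fun_prop : Continuous fun u => cos (2 * δ - u)).intervalIntegrable _ _),
      integral_comp_sub_left (fun u => cos u), integral_cos]
    simp only [integral_const, smul_eq_mul, sub_self, sin_zero]
    ring_nf
  have htail : ∫ u in 2 * δ..π, bumpProfile a δ u = 0 := by
    rw [integral_congr fun u hu => bumpProfile_of_two_mul_le hδ (uIcc_of_le hδπ ▸ hu).1]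
    simp
  rw [← integral_add_adjacent_intervals (hint 0 δ) (hint δ π),
    ← integral_add_adjacent_intervals (hint δ (2 * δ)) (hint (2 * δ) π), hcap, harc, htail]
  ring

variable {m x : ℝ}

lemma periodic_circleBump : Function.Periodic (circleBump a δ m) (2 * π) := fun x => by
  simp only [circleBump, show x + 2 * π - m = x - m + 2 * π by ring, cos_add_two_pi]

lemma circleBump_eq_bumpProfile_abs (h : |x - m| ≤ π) :
    circleBump a δ m x = bumpProfile a δ |x - m| := by
  rw [circleBump, ← cos_abs, arccos_cos (abs_nonneg _) h]

lemma circleBump_nonneg (ha : 0 ≤ a) (hδπ : δ ≤ π) : 0 ≤ circleBump a δ m x :=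
  bumpProfile_nonneg ha hδπ (arccos_nonneg _)

lemma circleBump_eq_zero_of_cos_le (hδ : 0 < δ) (hδπ : 2 * δ ≤ π)
    (h : cos (x - m) ≤ cos (2 * δ)) : circleBump a δ m x = 0 := by
  refine bumpProfile_of_two_mul_le hδ ?_
  calc 2 * δ = arccos (cos (2 * δ)) := (arccos_cos (by linarith) hδπ).symm
    _ ≤ arccos (cos (x - m)) := arccos_le_arccos h

lemma circleBump_eq_of_cos_le (hδ : 0 ≤ δ) (hδπ : δ ≤ π) (h : cos δ ≤ cos (x - m)) :
    circleBump a δ m x = a * (1 - 2 * cos δ + cos (x - m)) := by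
  have hle : arccos (cos (x - m)) ≤ δ := by
    calc arccos (cos (x - m)) ≤ arccos (cos δ) := arccos_le_arccos h
      _ = δ := arccos_cos hδ hδπ
  rw [circleBump, bumpProfile_of_le hle, cos_arccos (neg_one_le_cos _) (cos_le_one _)]

lemma differentiable_circleBump (hδ : 0 < δ) (hδπ : 2 * δ < π) :
    Differentiable ℝ (circleBump a δ m) := by
  intro x
  have hcont : Continuous fun y => cos (y - m) := by fun_prop
  by_cases hlow : cos (x - m) < cos (2 * δ)
  · refine (differentiableAt_const 0).congr_of_eventuallyEq ?_
    filter_upwards [hcont.continuousAt.eventually_lt continuousAt_const hlow] with y hy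
    exact circleBump_eq_zero_of_cos_le hδ hδπ.le hy.le
  by_cases hhigh : cos δ < cos (x - m)
  · refine (by fun_prop : DifferentiableAt ℝ (fun y => a * (1 - 2 * cos δ + cos (y - m))) x)
      |>.congr_of_eventuallyEq ?_
    filter_upwards [continuousAt_const.eventually_lt hcont.continuousAt hhigh] with y hy
    exact circleBump_eq_of_cos_le hδ.le (by linarith) hy.le
  rw [not_lt] at hlow hhigh
  have hne_neg_one : cos (x - m) ≠ -1 := by
    have : cos π < cos (2 * δ) := cos_lt_cos_of_nonneg_of_le_pi (by linarith) le_rfl hδπ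
    rw [cos_pi] at this
    linarith
  have hne_one : cos (x - m) ≠ 1 := by
    linarith [cos_lt_one_of_pos_of_le_pi hδ (by linarith)]
  change DifferentiableAt ℝ (bumpProfile a δ ∘ arccos ∘ fun y => cos (y - m)) x
  exact (differentiable_bumpProfile hδ _).comp x
    ((differentiableAt_arccos.2 ⟨hne_neg_one, hne_one⟩).comp x (by fun_prop))

lemma integral_circleBump (hδ : 0 < δ) (hδπ : 2 * δ ≤ π) :
    ∫ x in 0..2 * π, circleBump a δ m x = 4 * a * δ * (1 - cos δ) := by
  have hcont : Continuous (bumpProfile a δ) := (differentiable_bumpProfile hδ).continuous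
  calc ∫ x in 0..2 * π, circleBump a δ m x
      = ∫ x in -π + m..π + m, circleBump a δ m x := by
        simpa [show -π + m + 2 * π = π + m by ring] using
          periodic_circleBump.intervalIntegral_add_eq 0 (-π + m)
    _ = ∫ u in -π..π, circleBump a δ m (u + m) := (integral_comp_add_right _ m).symm
    _ = ∫ u in -π..π, bumpProfile a δ |u| := integral_congr fun u hu => by
        rw [uIcc_of_le (neg_le_self pi_pos.le)] at hu
        rw [circleBump_eq_bumpProfile_abs, add_sub_cancel_right]
        rwa [add_sub_cancel_right, abs_le]
    _ = 2 * ∫ u in 0..π, bumpProfile a δ u := integral_comp_abs_symm hcont pi_pos.le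
    _ = 4 * a * δ * (1 - cos δ) := by rw [integral_bumpProfile hδ hδπ]; ring

lemma circleBump_eq_zero_of_coe_notMem (hδ : 0 < δ)
    (hx : (x : AddCircle (2 * π)) ∉
      (fun y : ℝ => (y : AddCircle (2 * π))) '' Ioo (m - 2 * δ) (m + 2 * δ)) :
    circleBump a δ m x = 0 := by
  set n := toIocDiv two_pi_pos (m - π) x
  set y := toIocMod two_pi_pos (m - π) x
  have hyx : y = x - n • (2 * π) := by rw [← self_sub_toIocMod]; ring
  have hy : |y - m| ≤ π := by
    have := toIocMod_mem_Ioc two_pi_pos (m - π) x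
    rw [abs_le]; constructor <;> linarith [this.1, this.2]
  rw [← (periodic_circleBump (a := a) (δ := δ) (m := m)).sub_zsmul_eq n, ← hyx,
    circleBump_eq_bumpProfile_abs hy]
  by_contra hne
  have hnear : |y - m| < 2 * δ := not_le.1 fun h => hne (bumpProfile_of_two_mul_le hδ h)
  refine hx ⟨y, by rw [abs_lt] at hnear; constructor <;> linarith, ?_⟩
  simp only [hyx, AddCircle.coe_sub, AddCircle.coe_zsmul, AddCircle.coe_period, smul_zero,
    sub_zero]

lemma isPiecewiseMobius_circleBump (hδ : 0 < δ) (hδπ : 2 * δ < π) :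
    IsPiecewiseMobius (circleBump a δ m) := by
  refine .of_isMobiusOn periodic_circleBump (differentiable_circleBump hδ hδπ)
    (fun k => [m - 2 * δ, m - δ, m + δ, m + 2 * δ, m - 2 * δ + 2 * π].getD k 0) (N := 4)
    (by norm_num) (fun k hk => ?_) (by simp) (fun k hk1 hk4 => ?_)
  · interval_cases k <;> simp <;> linarith
  interval_cases k <;> simp only [Nat.reduceSub, List.getD_cons_zero, List.getD_cons_succ]
  · refine .of_eqOn_cos_sub (A := a) (B := -a) (c := m - 2 * δ) fun x hx => ?_
    rw [circleBump_eq_bumpProfile_abs (abs_le.2 ⟨by linarith [hx.1], by linarith [hx.2]⟩),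
      abs_of_nonpos (by linarith [hx.2]),
      bumpProfile_of_mem_Icc ⟨by linarith [hx.2], by linarith [hx.1]⟩,
      show 2 * δ - -(x - m) = x - (m - 2 * δ) by ring]
    ring
  · refine .of_eqOn_cos_sub (A := a * (1 - 2 * cos δ)) (B := a) (c := m) fun x hx => ?_
    have hcos : cos δ ≤ cos (x - m) := by
      rw [← cos_abs (x - m)]
      exact cos_le_cos_of_nonneg_of_le_pi (abs_nonneg _) (by linarith)
        (abs_le.2 ⟨by linarith [hx.1], by linarith [hx.2]⟩)
    rw [circleBump_eq_of_cos_le hδ.le (by linarith) hcos]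
    ring
  · refine .of_eqOn_cos_sub (A := a) (B := -a) (c := m + 2 * δ) fun x hx => ?_
    rw [circleBump_eq_bumpProfile_abs (abs_le.2 ⟨by linarith [hx.1], by linarith [hx.2]⟩),
      abs_of_nonneg (by linarith [hx.1]),
      bumpProfile_of_mem_Icc ⟨by linarith [hx.1], by linarith [hx.2]⟩,
      show 2 * δ - (x - m) = -(x - (m + 2 * δ)) by ring, cos_neg]
    ring
  · refine .of_eqOn_cos_sub (A := 0) (B := 0) (c := 0) fun x hx => ?_
    rw [circleBump_eq_zero_of_cos_le hδ hδπ.le (cos_le_cos_of_le_of_le_two_pi_sub (by linarith)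
      (by linarith [hx.1]) (by linarith [hx.2]))]
    ring

end MobiusBump

open MobiusBump

/-- Existence of nonnegative piecewise Möbius "bump" vector fields of unit
mean, localized in any prescribed open arc of the circle. -/
theorem piecewise_mobius_bump_exists (s t : ℝ) (hst : s < t)
    (hlen : t - s < 2 * Real.pi) :
    ∃ f : ℝ → ℝ, IsPiecewiseMobius f ∧ (∀ x : ℝ, 0 ≤ f x) ∧
      (∀ x : ℝ, (x : AddCircle (2 * Real.pi)) ∉
        (fun y : ℝ => (y : AddCircle (2 * Real.pi))) '' Set.Ioo s t → f x = 0) ∧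
      (1 / (2 * Real.pi)) * ∫ x in (0 : ℝ)..(2 * Real.pi), f x = 1 := by
  set δ := (t - s) / 4 with hδ_def
  set m := (s + t) / 2 with hm_def
  have hδ : 0 < δ := by rw [hδ_def]; linarith
  have hδπ : 2 * δ < π := by rw [hδ_def]; linarith
  have hcosδ : 0 < 1 - cos δ := sub_pos.2 (cos_lt_one_of_pos_of_le_pi hδ (by linarith))
  set a := π / (2 * δ * (1 - cos δ)) with ha_def
  have ha : 0 < a := by positivity
  have harc : Ioo (m - 2 * δ) (m + 2 * δ) = Ioo s t := by
    rw [hm_def, hδ_def]; congr 1 <;> ring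
  refine ⟨circleBump a δ m, isPiecewiseMobius_circleBump hδ hδπ,
    fun x => circleBump_nonneg ha.le (by linarith),
    fun x hx => circleBump_eq_zero_of_coe_notMem hδ (harc ▸ hx), ?_⟩
  rw [integral_circleBump hδ hδπ.le, ha_def]
  field_simp
  ring
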